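/- arXiv:2111.05640 — 9 statements merged into one kernel-verified Lean document; each statement's English description precedes it below -/
import Mathlib

section
/- Let α, β ∈ ℂ with α ≠ 0 and β ≠ 0 and |α|² + |β|² = 1, and let a₁, a₃ ∈ ℝ with a₁ ≠ 0, a₃ ≠ 0 and a₁² + a₃² = 1. Set q = α + β·i and p = a₁ + a₃·j in the biquaternions ℍ[ℂ] (where a₁, a₃ are viewed as real complex scalars). Then the concurrence of Λ(q) = p·q·p equals 4·|α|·|β|·|a₁|·|a₃|; in particular C(p·q·p) ≠ 0, i.e., Λ(q) is entangled. -/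
open Quaternion

/-- The concurrence of a biquaternion `x = x₁ + x₂·i + x₃·j + x₄·k`:
`C(x) = 2·|x₁·x₄ − x₂·x₃|`.  `x` is entangled iff `C(x) ≠ 0`. -/
noncomputable def concurrence (x : ℍ[ℂ]) : ℝ :=
  2 * ‖x.re * x.imK - x.imI * x.imJ‖

theorem Quaternion.sandwich_mk_re_imJ_mk_re_imI {R : Type*} [CommRing R] (a c α β : R) :
    (⟨a, 0, c, 0⟩ : ℍ[R]) * ⟨α, β, 0, 0⟩ * ⟨a, 0, c, 0⟩ =
      ⟨(a ^ 2 - c ^ 2) * α, (a ^ 2 + c ^ 2) * β, 2 * a * c * α, 0⟩ := by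
  ext <;> simp <;> ring

theorem concurrence_mk_of_imK_eq_zero (x₁ x₂ x₃ : ℂ) :
    concurrence ⟨x₁, x₂, x₃, 0⟩ = 2 * ‖x₂‖ * ‖x₃‖ := by
  simp [concurrence, mul_assoc]

theorem stmt_0_general (α β : ℂ) (hα : α ≠ 0) (hβ : β ≠ 0)
    (a₁ a₃ : ℝ) (ha₁ : a₁ ≠ 0) (ha₃ : a₃ ≠ 0) (hab : a₁ ^ 2 + a₃ ^ 2 = 1)
    (q p : ℍ[ℂ]) (hq : q = (⟨α, β, 0, 0⟩ : ℍ[ℂ])) (hp : p = (⟨(a₁ : ℂ), 0, (a₃ : ℂ), 0⟩ : ℍ[ℂ])) :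
    concurrence (p * q * p) =
      4 * ‖α‖ * ‖β‖ * |a₁| * |a₃| ∧
    concurrence (p * q * p) ≠ 0 := by
  have hpqp : p * q * p =
      ⟨((a₁ : ℂ) ^ 2 - (a₃ : ℂ) ^ 2) * α, ((a₁ : ℂ) ^ 2 + (a₃ : ℂ) ^ 2) * β, 2 * a₁ * a₃ * α, 0⟩ := by
    rw [hp, hq]
    exact sandwich_mk_re_imJ_mk_re_imI _ _ _ _
  have hab' : (a₁ : ℂ) ^ 2 + (a₃ : ℂ) ^ 2 = 1 := by exact_mod_cast hab
  have hC : concurrence (p * q * p) = 4 * ‖α‖ * ‖β‖ * |a₁| * |a₃| := by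
    rw [hpqp, hab', concurrence_mk_of_imK_eq_zero]
    simp only [one_mul, norm_mul, Complex.norm_ofNat, Complex.norm_real, Real.norm_eq_abs]
    ring
  refine ⟨hC, hC ▸ ?_⟩
  simp [hα, hβ, ha₁, ha₃]

theorem stmt_0 (α β : ℂ) (hα : α ≠ 0) (hβ : β ≠ 0)
    (hαβ : ‖α‖ ^ 2 + ‖β‖ ^ 2 = 1)
    (a₁ a₃ : ℝ) (ha₁ : a₁ ≠ 0) (ha₃ : a₃ ≠ 0) (hab : a₁ ^ 2 + a₃ ^ 2 = 1)
    (q p : ℍ[ℂ]) (hq : q = (⟨α, β, 0, 0⟩ : ℍ[ℂ])) (hp : p = (⟨(a₁ : ℂ), 0, (a₃ : ℂ), 0⟩ : ℍ[ℂ])) :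
    concurrence (p * q * p) =
      4 * ‖α‖ * ‖β‖ * |a₁| * |a₃| ∧
    concurrence (p * q * p) ≠ 0 :=
  stmt_0_general α β hα hβ a₁ a₃ ha₁ ha₃ hab q p hq hp
end

section
/- Let α, β ∈ ℂ with α ≠ 0 and β ≠ 0 and |α|² + |β|² = 1, and let a₂, a₄ ∈ ℝ with a₂ ≠ 0, a₄ ≠ 0 and a₂² + a₄² = 1. Set q = α + β·i and p = a₂·i + a₄·k in the biquaternions ℍ[ℂ]. Then the concurrence of Λ(q) = p·q·p equals 4·|α|·|β|·|a₂|·|a₄|; in particular C(p·q·p) ≠ 0, i.e., Λ(q) is entangled. -/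
open Quaternion

theorem Quaternion.re_mul_mul_of_pure_ik {R : Type*} [CommRing R] {p q : ℍ[R]}
    (hp₁ : p.re = 0) (hp₃ : p.imJ = 0) (hq₃ : q.imJ = 0) (hq₄ : q.imK = 0) :
    (p * q * p).re = -(p.imI ^ 2 + p.imK ^ 2) * q.re := by
  simp only [re_mul, imI_mul, imJ_mul, imK_mul, hp₁, hp₃, hq₃, hq₄]; ring

theorem Quaternion.imJ_mul_mul_of_pure_ik {R : Type*} [CommRing R] {p q : ℍ[R]}
    (hp₁ : p.re = 0) (hp₃ : p.imJ = 0) (hq₃ : q.imJ = 0) (hq₄ : q.imK = 0) :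
    (p * q * p).imJ = 0 := by
  simp only [re_mul, imI_mul, imJ_mul, imK_mul, hp₁, hp₃, hq₃, hq₄]; ring

theorem Quaternion.imK_mul_mul_of_pure_ik {R : Type*} [CommRing R] {p q : ℍ[R]}
    (hp₁ : p.re = 0) (hp₃ : p.imJ = 0) (hq₃ : q.imJ = 0) (hq₄ : q.imK = 0) :
    (p * q * p).imK = -(2 * p.imI * p.imK * q.imI) := by
  simp only [re_mul, imI_mul, imJ_mul, imK_mul, hp₁, hp₃, hq₃, hq₄]; ring

theorem concurrence_of_imJ_eq_zero {x : ℍ[ℂ]} (hx : x.imJ = 0) :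
    concurrence x = 2 * ‖x.re‖ * ‖x.imK‖ := by
  rw [concurrence, hx, mul_zero, sub_zero, norm_mul, mul_assoc]

theorem concurrence_mul_mul_of_pure_ik {p q : ℍ[ℂ]}
    (hp₁ : p.re = 0) (hp₃ : p.imJ = 0) (hq₃ : q.imJ = 0) (hq₄ : q.imK = 0) :
    concurrence (p * q * p) =
      4 * ‖p.imI ^ 2 + p.imK ^ 2‖ * ‖q.re‖ * ‖q.imI‖ * ‖p.imI‖ * ‖p.imK‖ := by
  rw [concurrence_of_imJ_eq_zero (imJ_mul_mul_of_pure_ik hp₁ hp₃ hq₃ hq₄),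
    re_mul_mul_of_pure_ik hp₁ hp₃ hq₃ hq₄, imK_mul_mul_of_pure_ik hp₁ hp₃ hq₃ hq₄]
  simp only [norm_neg, norm_mul, Complex.norm_ofNat]
  ring

theorem stmt_1_general (α β : ℂ) (hα : α ≠ 0) (hβ : β ≠ 0)
    (a₂ a₄ : ℝ) (ha₂ : a₂ ≠ 0) (ha₄ : a₄ ≠ 0) (hab : a₂ ^ 2 + a₄ ^ 2 = 1)
    (q p : ℍ[ℂ]) (hq : q = (⟨α, β, 0, 0⟩ : ℍ[ℂ])) (hp : p = (⟨0, (a₂ : ℂ), 0, (a₄ : ℂ)⟩ : ℍ[ℂ])) :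
    concurrence (p * q * p) =
      4 * ‖α‖ * ‖β‖ * |a₂| * |a₄| ∧
    concurrence (p * q * p) ≠ 0 := by
  have hC : concurrence (p * q * p) = 4 * ‖α‖ * ‖β‖ * |a₂| * |a₄| := by
    rw [concurrence_mul_mul_of_pure_ik (by rw [hp]) (by rw [hp]) (by rw [hq]) (by rw [hq])]
    simp only [hp, hq, ← Complex.ofReal_pow, ← Complex.ofReal_add, hab, Complex.ofReal_one, norm_one,
      Complex.norm_real, Real.norm_eq_abs, mul_one]
  refine ⟨hC, ?_⟩
  rw [hC]
  positivity

theorem stmt_1 (α β : ℂ) (hα : α ≠ 0) (hβ : β ≠ 0)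
    (hαβ : ‖α‖ ^ 2 + ‖β‖ ^ 2 = 1)
    (a₂ a₄ : ℝ) (ha₂ : a₂ ≠ 0) (ha₄ : a₄ ≠ 0) (hab : a₂ ^ 2 + a₄ ^ 2 = 1)
    (q p : ℍ[ℂ]) (hq : q = (⟨α, β, 0, 0⟩ : ℍ[ℂ])) (hp : p = (⟨0, (a₂ : ℂ), 0, (a₄ : ℂ)⟩ : ℍ[ℂ])) :
    concurrence (p * q * p) =
      4 * ‖α‖ * ‖β‖ * |a₂| * |a₄| ∧
    concurrence (p * q * p) ≠ 0 :=
  stmt_1_general α β hα hβ a₂ a₄ ha₂ ha₄ hab q p hq hp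
end

section
/- Let α, β ∈ ℂ with α ≠ 0 and β ≠ 0 and |α|² + |β|² = 1, and let a₂, a₄ ∈ ℝ with a₂ ≠ 0, a₄ ≠ 0 and a₂² + a₄² = 1. Set q = α·j + β·k and p = a₂·i + a₄·k in the biquaternions ℍ[ℂ]. Then the concurrence of Λ(q) = p·q·p equals 4·|α|·|β|·|a₂|·|a₄|; in particular C(p·q·p) ≠ 0, i.e., Λ(q) is entangled. -/
open Quaternion

/-! For pure `p = x i + z k` and `q = a j + b k` over any commutative ring,
`p q p = -2xzb i + (x² + z²)a j + (x² - z²)b k`, whose concurrence is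
`4 |x z (x² + z²) a b|`; on the unit circle `x² + z² = 1` this is `4 |x| |z| |a| |b|`. -/

theorem concurrence_of_re_eq_zero {x : ℍ[ℂ]} (hx : x.re = 0) :
    concurrence x = 2 * ‖x.imI‖ * ‖x.imJ‖ := by
  rw [concurrence, hx, zero_mul, zero_sub, norm_neg, norm_mul, mul_assoc]

namespace Quaternion

variable {R : Type*} [CommRing R] {p q : ℍ[R]}

theorem re_mul_mul_self_of_pure (hp₀ : p.re = 0) (hp₂ : p.imJ = 0) (hq₀ : q.re = 0)
    (hq₁ : q.imI = 0) : (p * q * p).re = 0 := by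
  simp only [re_mul, imI_mul, imJ_mul, imK_mul, hp₀, hp₂, hq₀, hq₁]
  ring

theorem imI_mul_mul_self_of_pure (hp₀ : p.re = 0) (hp₂ : p.imJ = 0) (hq₀ : q.re = 0)
    (hq₁ : q.imI = 0) : (p * q * p).imI = -2 * p.imI * p.imK * q.imK := by
  simp only [re_mul, imI_mul, imJ_mul, imK_mul, hp₀, hp₂, hq₀, hq₁]
  ring

theorem imJ_mul_mul_self_of_pure (hp₀ : p.re = 0) (hp₂ : p.imJ = 0) (hq₀ : q.re = 0)
    (hq₁ : q.imI = 0) : (p * q * p).imJ = (p.imI ^ 2 + p.imK ^ 2) * q.imJ := by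
  simp only [re_mul, imI_mul, imJ_mul, imK_mul, hp₀, hp₂, hq₀, hq₁]
  ring

end Quaternion

theorem concurrence_mul_mul_self_of_pure {p q : ℍ[ℂ]} (hp₀ : p.re = 0) (hp₂ : p.imJ = 0)
    (hq₀ : q.re = 0) (hq₁ : q.imI = 0) :
    concurrence (p * q * p) =
      4 * ‖p.imI‖ * ‖p.imK‖ * ‖p.imI ^ 2 + p.imK ^ 2‖ * ‖q.imJ‖ * ‖q.imK‖ := by
  rw [concurrence_of_re_eq_zero (re_mul_mul_self_of_pure hp₀ hp₂ hq₀ hq₁),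
    imI_mul_mul_self_of_pure hp₀ hp₂ hq₀ hq₁, imJ_mul_mul_self_of_pure hp₀ hp₂ hq₀ hq₁]
  simp only [norm_mul, norm_neg, Complex.norm_two]
  ring

theorem stmt_3_general (α β : ℂ) (hα : α ≠ 0) (hβ : β ≠ 0)
    (a₂ a₄ : ℝ) (ha₂ : a₂ ≠ 0) (ha₄ : a₄ ≠ 0) (hab : a₂ ^ 2 + a₄ ^ 2 = 1)
    (q p : ℍ[ℂ]) (hq : q = (⟨0, 0, α, β⟩ : ℍ[ℂ])) (hp : p = (⟨0, (a₂ : ℂ), 0, (a₄ : ℂ)⟩ : ℍ[ℂ])) :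
    concurrence (p * q * p) =
      4 * ‖α‖ * ‖β‖ * |a₂| * |a₄| ∧
    concurrence (p * q * p) ≠ 0 := by
  have hab' : (a₂ : ℂ) ^ 2 + (a₄ : ℂ) ^ 2 = 1 := by exact_mod_cast hab
  have hc : concurrence (p * q * p) = 4 * ‖α‖ * ‖β‖ * |a₂| * |a₄| := by
    rw [concurrence_mul_mul_self_of_pure (by rw [hp]) (by rw [hp]) (by rw [hq]) (by rw [hq])]
    subst hp hq
    dsimp only
    rw [hab', norm_one, Complex.norm_real, Complex.norm_real, Real.norm_eq_abs, Real.norm_eq_abs]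
    ring
  exact ⟨hc, hc ▸ by simp [hα, hβ, ha₂, ha₄]⟩

theorem stmt_3 (α β : ℂ) (hα : α ≠ 0) (hβ : β ≠ 0)
    (hαβ : ‖α‖ ^ 2 + ‖β‖ ^ 2 = 1)
    (a₂ a₄ : ℝ) (ha₂ : a₂ ≠ 0) (ha₄ : a₄ ≠ 0) (hab : a₂ ^ 2 + a₄ ^ 2 = 1)
    (q p : ℍ[ℂ]) (hq : q = (⟨0, 0, α, β⟩ : ℍ[ℂ])) (hp : p = (⟨0, (a₂ : ℂ), 0, (a₄ : ℂ)⟩ : ℍ[ℂ])) :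
    concurrence (p * q * p) =
      4 * ‖α‖ * ‖β‖ * |a₂| * |a₄| ∧
    concurrence (p * q * p) ≠ 0 :=
  stmt_3_general α β hα hβ a₂ a₄ ha₂ ha₄ hab q p hq hp
end

section
/- Let α, β ∈ ℂ with α ≠ 0 and β ≠ 0 and |α|² + |β|² = 1, and let a₁, a₂ ∈ ℝ with a₁ ≠ 0, a₂ ≠ 0 and a₁² + a₂² = 1. Set q = α + β·j and p = a₁ + a₂·i in the biquaternions ℍ[ℂ]. Then the concurrence of Λ(q) = p·q·p equals 4·|α|·|β|·|a₁|·|a₂|; in particular C(p·q·p) ≠ 0, i.e., Λ(q) is entangled. -/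
open Quaternion

/-! The product `(a + b·i)(c + d·j)(a + b·i)` equals `(a² − b²)c + 2abc·i + (a² + b²)d·j`,
with vanishing `k`-component, so its concurrence is `4|ab||cd|·|a² + b²|`; for real `a, b` with
`a² + b² = 1` the last factor is `1`. -/

theorem Quaternion.mul_mul_self_eq {R : Type*} [CommRing R] {x y : ℍ[R]} (hxj : x.imJ = 0)
    (hxk : x.imK = 0) (hyi : y.imI = 0) (hyk : y.imK = 0) :
    x * y * x = ⟨(x.re ^ 2 - x.imI ^ 2) * y.re, 2 * x.re * x.imI * y.re,
      (x.re ^ 2 + x.imI ^ 2) * y.imJ, 0⟩ := by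
  ext <;> simp only [re_mul, imI_mul, imJ_mul, imK_mul, hxj, hxk, hyi, hyk] <;> ring

theorem concurrence_mul_mul_self {x y : ℍ[ℂ]} (hxj : x.imJ = 0) (hxk : x.imK = 0)
    (hyi : y.imI = 0) (hyk : y.imK = 0) :
    concurrence (x * y * x) =
      4 * ‖x.re‖ * ‖x.imI‖ * ‖y.re‖ * ‖y.imJ‖ * ‖x.re ^ 2 + x.imI ^ 2‖ := by
  rw [Quaternion.mul_mul_self_eq hxj hxk hyi hyk]
  unfold concurrence
  simp only [mul_zero, zero_sub, norm_neg, norm_mul, Complex.norm_ofNat]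
  ring

theorem stmt_4_general (α β : ℂ) (hα : α ≠ 0) (hβ : β ≠ 0)
    (a₁ a₂ : ℝ) (ha₁ : a₁ ≠ 0) (ha₂ : a₂ ≠ 0) (hab : a₁ ^ 2 + a₂ ^ 2 = 1)
    (q p : ℍ[ℂ]) (hq : q = (⟨α, 0, β, 0⟩ : ℍ[ℂ])) (hp : p = (⟨(a₁ : ℂ), (a₂ : ℂ), 0, 0⟩ : ℍ[ℂ])) :
    concurrence (p * q * p) =
      4 * ‖α‖ * ‖β‖ * |a₁| * |a₂| ∧
    concurrence (p * q * p) ≠ 0 := by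
  have hab' : (a₁ : ℂ) ^ 2 + (a₂ : ℂ) ^ 2 = 1 := by exact_mod_cast hab
  have hC : concurrence (p * q * p) = 4 * ‖α‖ * ‖β‖ * |a₁| * |a₂| := by
    rw [concurrence_mul_mul_self (hp ▸ rfl) (hp ▸ rfl) (hq ▸ rfl) (hq ▸ rfl), hp, hq]
    dsimp only
    rw [hab', norm_one, Complex.norm_real, Complex.norm_real, Real.norm_eq_abs, Real.norm_eq_abs]
    ring
  exact ⟨hC, hC ▸ by simp [hα, hβ, ha₁, ha₂]⟩

theorem stmt_4 (α β : ℂ) (hα : α ≠ 0) (hβ : β ≠ 0)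
    (hαβ : ‖α‖ ^ 2 + ‖β‖ ^ 2 = 1)
    (a₁ a₂ : ℝ) (ha₁ : a₁ ≠ 0) (ha₂ : a₂ ≠ 0) (hab : a₁ ^ 2 + a₂ ^ 2 = 1)
    (q p : ℍ[ℂ]) (hq : q = (⟨α, 0, β, 0⟩ : ℍ[ℂ])) (hp : p = (⟨(a₁ : ℂ), (a₂ : ℂ), 0, 0⟩ : ℍ[ℂ])) :
    concurrence (p * q * p) =
      4 * ‖α‖ * ‖β‖ * |a₁| * |a₂| ∧
    concurrence (p * q * p) ≠ 0 :=
  stmt_4_general α β hα hβ a₁ a₂ ha₁ ha₂ hab q p hq hp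
end

section
/- Let α, β ∈ ℂ with α ≠ 0 and β ≠ 0 and |α|² + |β|² = 1, and let a₃, a₄ ∈ ℝ with a₃ ≠ 0, a₄ ≠ 0 and a₃² + a₄² = 1. Set q = α + β·j and p = a₃·j + a₄·k in the biquaternions ℍ[ℂ]. Then the concurrence of Λ(q) = p·q·p equals 4·|α|·|β|·|a₃|·|a₄|; in particular C(p·q·p) ≠ 0, i.e., Λ(q) is entangled. -/
open Quaternion

/- With `p = a·j + b·k` and `q = α + β·j` one has `p² = -(a² + b²)` and `p·j·p = (b² - a²)·j - 2ab·k`,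
so `p·q·p = -(a² + b²)·α + (b² - a²)·β·j - 2ab·β·k`, whose concurrence is read off from the
real and `k` components alone since the `i` component vanishes. -/

theorem Quaternion.sandwich_jk_mul_one_j {R : Type*} [CommRing R] {α β a b : R} {p q : ℍ[R]}
    (hp : p = ⟨0, 0, a, b⟩) (hq : q = ⟨α, 0, β, 0⟩) :
    p * q * p = ⟨-(α * (a ^ 2 + b ^ 2)), 0, β * (b ^ 2 - a ^ 2), -(2 * a * b * β)⟩ := by
  ext <;> simp only [re_mul, imI_mul, imJ_mul, imK_mul] <;> simp only [hp, hq] <;> ring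

theorem concurrence_sandwich_jk_one_j {α β : ℂ} {a b : ℝ} {p q : ℍ[ℂ]}
    (hp : p = ⟨0, 0, (a : ℂ), (b : ℂ)⟩) (hq : q = ⟨α, 0, β, 0⟩) :
    concurrence (p * q * p) = 4 * ‖α‖ * ‖β‖ * |a| * |b| * (a ^ 2 + b ^ 2) := by
  have hsq : (0 : ℝ) ≤ a ^ 2 + b ^ 2 := by positivity
  rw [concurrence, Quaternion.sandwich_jk_mul_one_j hp hq]
  calc 2 * ‖-(α * ((a : ℂ) ^ 2 + (b : ℂ) ^ 2)) * -(2 * a * b * β) - 0 * (β * (b ^ 2 - a ^ 2))‖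
      = 2 * ‖(2 : ℂ) * α * β * a * b * ((a ^ 2 + b ^ 2 : ℝ) : ℂ)‖ := by push_cast; ring_nf
    _ = 4 * ‖α‖ * ‖β‖ * |a| * |b| * (a ^ 2 + b ^ 2) := by
      simp only [norm_mul, Complex.norm_real, Real.norm_eq_abs, Complex.norm_two,
        abs_of_nonneg hsq]
      ring

theorem stmt_5_general (α β : ℂ) (hα : α ≠ 0) (hβ : β ≠ 0)
    (a₃ a₄ : ℝ) (ha₃ : a₃ ≠ 0) (ha₄ : a₄ ≠ 0) (hab : a₃ ^ 2 + a₄ ^ 2 = 1)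
    (q p : ℍ[ℂ]) (hq : q = (⟨α, 0, β, 0⟩ : ℍ[ℂ])) (hp : p = (⟨0, 0, (a₃ : ℂ), (a₄ : ℂ)⟩ : ℍ[ℂ])) :
    concurrence (p * q * p) =
      4 * ‖α‖ * ‖β‖ * |a₃| * |a₄| ∧
    concurrence (p * q * p) ≠ 0 := by
  rw [concurrence_sandwich_jk_one_j hp hq, hab, mul_one]
  exact ⟨rfl, by positivity⟩

theorem stmt_5 (α β : ℂ) (hα : α ≠ 0) (hβ : β ≠ 0)
    (hαβ : ‖α‖ ^ 2 + ‖β‖ ^ 2 = 1)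
    (a₃ a₄ : ℝ) (ha₃ : a₃ ≠ 0) (ha₄ : a₄ ≠ 0) (hab : a₃ ^ 2 + a₄ ^ 2 = 1)
    (q p : ℍ[ℂ]) (hq : q = (⟨α, 0, β, 0⟩ : ℍ[ℂ])) (hp : p = (⟨0, 0, (a₃ : ℂ), (a₄ : ℂ)⟩ : ℍ[ℂ])) :
    concurrence (p * q * p) =
      4 * ‖α‖ * ‖β‖ * |a₃| * |a₄| ∧
    concurrence (p * q * p) ≠ 0 :=
  stmt_5_general α β hα hβ a₃ a₄ ha₃ ha₄ hab q p hq hp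
end

section
/- Let α, β ∈ ℂ with α ≠ 0 and β ≠ 0 and |α|² + |β|² = 1, and let a₁, a₂ ∈ ℝ with a₁ ≠ 0, a₂ ≠ 0 and a₁² + a₂² = 1. Set q = α·i + β·k and p = a₁ + a₂·i in the biquaternions ℍ[ℂ]. Then the concurrence of Λ(q) = p·q·p equals 4·|α|·|β|·|a₁|·|a₂|; in particular C(p·q·p) ≠ 0, i.e., Λ(q) is entangled. -/
open Quaternion

/-! `p = a + b·i` commutes with `i` and satisfies `k·p = p̄·k`, so
`p·(α·i + β·k)·p = α·p²·i + β·|p|²·k = -2abα + (a² - b²)α·i + β·k` when `|p| = 1`.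
The `j`-part vanishes, so the concurrence is `2·|(-2abα)·β|`. -/

theorem sandwich_span_one_i_span_i_k {R : Type*} [CommRing R] (a b x y : R) :
    (⟨a, b, 0, 0⟩ : ℍ[R]) * ⟨0, x, 0, y⟩ * ⟨a, b, 0, 0⟩ =
      ⟨-2 * a * b * x, (a ^ 2 - b ^ 2) * x, 0, (a ^ 2 + b ^ 2) * y⟩ := by
  simp only [QuaternionAlgebra.mk_mul_mk]
  congr 1 <;> ring

theorem concurrence_mk_zero_imJ (w x z : ℂ) : concurrence ⟨w, x, 0, z⟩ = 2 * ‖w * z‖ := by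
  simp [concurrence]

theorem stmt_6_general (α β : ℂ) (hα : α ≠ 0) (hβ : β ≠ 0)
    (a₁ a₂ : ℝ) (ha₁ : a₁ ≠ 0) (ha₂ : a₂ ≠ 0) (hab : a₁ ^ 2 + a₂ ^ 2 = 1)
    (q p : ℍ[ℂ]) (hq : q = (⟨0, α, 0, β⟩ : ℍ[ℂ])) (hp : p = (⟨(a₁ : ℂ), (a₂ : ℂ), 0, 0⟩ : ℍ[ℂ])) :
    concurrence (p * q * p) =
      4 * ‖α‖ * ‖β‖ * |a₁| * |a₂| ∧
    concurrence (p * q * p) ≠ 0 := by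
  have hab' : (a₁ : ℂ) ^ 2 + (a₂ : ℂ) ^ 2 = 1 := by exact_mod_cast hab
  subst hq hp
  -- the constructors above are typed in `QuaternionAlgebra ℂ _ _ _` with unfolded coefficients,
  -- which `rw` does not identify with `ℍ[ℂ]`
  erw [sandwich_span_one_i_span_i_k]
  rw [hab', one_mul, concurrence_mk_zero_imJ]
  have hC : 2 * ‖-2 * (a₁ : ℂ) * a₂ * α * β‖ = 4 * ‖α‖ * ‖β‖ * |a₁| * |a₂| := by
    simp only [norm_mul, norm_neg, Complex.norm_real, Real.norm_eq_abs, Complex.norm_two]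
    ring
  have := norm_pos_iff.mpr hα
  have := norm_pos_iff.mpr hβ
  exact ⟨hC, hC ▸ by positivity⟩

theorem stmt_6 (α β : ℂ) (hα : α ≠ 0) (hβ : β ≠ 0)
    (hαβ : ‖α‖ ^ 2 + ‖β‖ ^ 2 = 1)
    (a₁ a₂ : ℝ) (ha₁ : a₁ ≠ 0) (ha₂ : a₂ ≠ 0) (hab : a₁ ^ 2 + a₂ ^ 2 = 1)
    (q p : ℍ[ℂ]) (hq : q = (⟨0, α, 0, β⟩ : ℍ[ℂ])) (hp : p = (⟨(a₁ : ℂ), (a₂ : ℂ), 0, 0⟩ : ℍ[ℂ])) :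
    concurrence (p * q * p) =
      4 * ‖α‖ * ‖β‖ * |a₁| * |a₂| ∧
    concurrence (p * q * p) ≠ 0 :=
  stmt_6_general α β hα hβ a₁ a₂ ha₁ ha₂ hab q p hq hp
end

section
/- Let α, β ∈ ℂ with α ≠ 0 and β ≠ 0 and |α|² + |β|² = 1, and let a₃, a₄ ∈ ℝ with a₃ ≠ 0, a₄ ≠ 0 and a₃² + a₄² = 1. Set q = α·i + β·k and p = a₃·j + a₄·k in the biquaternions ℍ[ℂ]. Then the concurrence of Λ(q) = p·q·p equals 4·|α|·|β|·|a₃|·|a₄|; in particular C(p·q·p) ≠ 0, i.e., Λ(q) is entangled. -/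
open Quaternion

/- For `p = c j + d k` and `q = a i + b k` one has
`p q p = a (c² + d²) i - 2 b c d j + b (c² - d²) k`. -/
theorem concurrence_mul_mul_self_s7 {p q : ℍ[ℂ]} (hp_re : p.re = 0) (hp_imI : p.imI = 0)
    (hq_re : q.re = 0) (hq_imJ : q.imJ = 0) :
    concurrence (p * q * p) =
      4 * ‖q.imI‖ * ‖q.imK‖ * ‖p.imJ‖ * ‖p.imK‖ * ‖p.imJ ^ 2 + p.imK ^ 2‖ := by
  have h : (p * q * p).re * (p * q * p).imK - (p * q * p).imI * (p * q * p).imJ =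
      2 * q.imI * q.imK * p.imJ * p.imK * (p.imJ ^ 2 + p.imK ^ 2) := by
    simp only [re_mul, imI_mul, imJ_mul, imK_mul, hp_re, hp_imI, hq_re, hq_imJ]
    ring
  rw [concurrence, h]
  simp only [norm_mul, Complex.norm_ofNat]
  ring

theorem stmt_7_general (α β : ℂ) (hα : α ≠ 0) (hβ : β ≠ 0)
    (a₃ a₄ : ℝ) (ha₃ : a₃ ≠ 0) (ha₄ : a₄ ≠ 0) (hab : a₃ ^ 2 + a₄ ^ 2 = 1)
    (q p : ℍ[ℂ]) (hq : q = (⟨0, α, 0, β⟩ : ℍ[ℂ])) (hp : p = (⟨0, 0, (a₃ : ℂ), (a₄ : ℂ)⟩ : ℍ[ℂ])) :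
    concurrence (p * q * p) =
      4 * ‖α‖ * ‖β‖ * |a₃| * |a₄| ∧
    concurrence (p * q * p) ≠ 0 := by
  have hab' : (a₃ : ℂ) ^ 2 + (a₄ : ℂ) ^ 2 = 1 := by exact_mod_cast hab
  have hC : concurrence (p * q * p) = 4 * ‖α‖ * ‖β‖ * |a₃| * |a₄| := by
    rw [concurrence_mul_mul_self_s7 (by rw [hp]) (by rw [hp]) (by rw [hq]) (by rw [hq]), hp, hq]
    dsimp only
    rw [hab', norm_one, mul_one, Complex.norm_real, Complex.norm_real, Real.norm_eq_abs,
      Real.norm_eq_abs]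
  exact ⟨hC, hC ▸ by positivity⟩

theorem stmt_7 (α β : ℂ) (hα : α ≠ 0) (hβ : β ≠ 0)
    (hαβ : ‖α‖ ^ 2 + ‖β‖ ^ 2 = 1)
    (a₃ a₄ : ℝ) (ha₃ : a₃ ≠ 0) (ha₄ : a₄ ≠ 0) (hab : a₃ ^ 2 + a₄ ^ 2 = 1)
    (q p : ℍ[ℂ]) (hq : q = (⟨0, α, 0, β⟩ : ℍ[ℂ])) (hp : p = (⟨0, 0, (a₃ : ℂ), (a₄ : ℂ)⟩ : ℍ[ℂ])) :
    concurrence (p * q * p) =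
      4 * ‖α‖ * ‖β‖ * |a₃| * |a₄| ∧
    concurrence (p * q * p) ≠ 0 :=
  stmt_7_general α β hα hβ a₃ a₄ ha₃ ha₄ hab q p hq hp
end

section
/- Let α, β ∈ ℂ with α ≠ 0, β ≠ 0, |α|² + |β|² = 1, and let a, b ∈ ℝ with a ≠ 0, b ≠ 0, a² + b² = 1. Suppose the pair (q, p) of biquaternions is one of the eight admissible configurations: q = α + β·i with p = a + b·j or p = a·i + b·k; q = α·j + β·k with p = a + b·j or p = a·i + b·k; q = α + β·j with p = a + b·i or p = a·j + b·k; q = α·i + β·k with p = a + b·i or p = a·j + b·k. Then the map Λ(q) = p·q·p produces an entangled biquaternion: C(p·q·p) ≠ 0. -/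
open Quaternion

/-! In all eight configurations `x₁x₄ − x₂x₃` of `p q p` equals `±2ab(a² + b²)αβ`, so
`C(p q p) = 4|a||b|(a² + b²)|α||β|`, which is nonzero as soon as `a, b, α, β` are. -/

def IsAdmissiblePair (α β : ℂ) (a b : ℝ) (q p : ℍ[ℂ]) : Prop :=
  (q = (⟨α, β, 0, 0⟩ : ℍ[ℂ]) ∧
    (p = (⟨(a : ℂ), 0, (b : ℂ), 0⟩ : ℍ[ℂ]) ∨ p = (⟨0, (a : ℂ), 0, (b : ℂ)⟩ : ℍ[ℂ]))) ∨
  (q = (⟨0, 0, α, β⟩ : ℍ[ℂ]) ∧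
    (p = (⟨(a : ℂ), 0, (b : ℂ), 0⟩ : ℍ[ℂ]) ∨ p = (⟨0, (a : ℂ), 0, (b : ℂ)⟩ : ℍ[ℂ]))) ∨
  (q = (⟨α, 0, β, 0⟩ : ℍ[ℂ]) ∧
    (p = (⟨(a : ℂ), (b : ℂ), 0, 0⟩ : ℍ[ℂ]) ∨ p = (⟨0, 0, (a : ℂ), (b : ℂ)⟩ : ℍ[ℂ]))) ∨
  (q = (⟨0, α, 0, β⟩ : ℍ[ℂ]) ∧
    (p = (⟨(a : ℂ), (b : ℂ), 0, 0⟩ : ℍ[ℂ]) ∨ p = (⟨0, 0, (a : ℂ), (b : ℂ)⟩ : ℍ[ℂ])))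

theorem concurrence_eq_of_sq_eq {x : ℍ[ℂ]} {c : ℂ}
    (h : (x.re * x.imK - x.imI * x.imJ) ^ 2 = c ^ 2) : concurrence x = 2 * ‖c‖ := by
  have hnorm : ‖x.re * x.imK - x.imI * x.imJ‖ ^ 2 = ‖c‖ ^ 2 := by rw [← norm_pow, h, norm_pow]
  rw [concurrence, (pow_left_inj₀ (norm_nonneg _) (norm_nonneg _) two_ne_zero).1 hnorm]

theorem concurrence_mul_mul_of_isAdmissiblePair {α β : ℂ} {a b : ℝ} {q p : ℍ[ℂ]}
    (h : IsAdmissiblePair α β a b q p) :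
    concurrence (p * q * p) = 4 * |a| * |b| * (a ^ 2 + b ^ 2) * ‖α‖ * ‖β‖ := by
  have hsq : ((p * q * p).re * (p * q * p).imK - (p * q * p).imI * (p * q * p).imJ) ^ 2 =
      (2 * ((a * b * (a ^ 2 + b ^ 2) : ℝ) : ℂ) * (α * β)) ^ 2 := by
    simp only [Quaternion.re_mul, Quaternion.imI_mul, Quaternion.imJ_mul, Quaternion.imK_mul]
    rcases h with ⟨rfl, rfl | rfl⟩ | ⟨rfl, rfl | rfl⟩ | ⟨rfl, rfl | rfl⟩ | ⟨rfl, rfl | rfl⟩ <;>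
    · push_cast
      ring
  have hsum : 0 ≤ a ^ 2 + b ^ 2 := by positivity
  rw [concurrence_eq_of_sq_eq hsq]
  simp only [norm_mul, Complex.norm_two, Complex.norm_real, Real.norm_eq_abs,
    abs_of_nonneg hsum]
  ring

theorem stmt_8_general (α β : ℂ) (hα : α ≠ 0) (hβ : β ≠ 0)
    (a b : ℝ) (ha : a ≠ 0) (hb : b ≠ 0) (hab : a ^ 2 + b ^ 2 = 1)
    (q p : ℍ[ℂ])
    (hconfig :
      (q = (⟨α, β, 0, 0⟩ : ℍ[ℂ]) ∧
        (p = (⟨(a : ℂ), 0, (b : ℂ), 0⟩ : ℍ[ℂ]) ∨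
         p = (⟨0, (a : ℂ), 0, (b : ℂ)⟩ : ℍ[ℂ]))) ∨
      (q = (⟨0, 0, α, β⟩ : ℍ[ℂ]) ∧
        (p = (⟨(a : ℂ), 0, (b : ℂ), 0⟩ : ℍ[ℂ]) ∨
         p = (⟨0, (a : ℂ), 0, (b : ℂ)⟩ : ℍ[ℂ]))) ∨
      (q = (⟨α, 0, β, 0⟩ : ℍ[ℂ]) ∧
        (p = (⟨(a : ℂ), (b : ℂ), 0, 0⟩ : ℍ[ℂ]) ∨
         p = (⟨0, 0, (a : ℂ), (b : ℂ)⟩ : ℍ[ℂ]))) ∨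
      (q = (⟨0, α, 0, β⟩ : ℍ[ℂ]) ∧
        (p = (⟨(a : ℂ), (b : ℂ), 0, 0⟩ : ℍ[ℂ]) ∨
         p = (⟨0, 0, (a : ℂ), (b : ℂ)⟩ : ℍ[ℂ])))) :
    concurrence (p * q * p) ≠ 0 := by
  rw [concurrence_mul_mul_of_isAdmissiblePair hconfig, hab, mul_one]
  positivity

theorem stmt_8 (α β : ℂ) (hα : α ≠ 0) (hβ : β ≠ 0)
    (hαβ : ‖α‖ ^ 2 + ‖β‖ ^ 2 = 1)
    (a b : ℝ) (ha : a ≠ 0) (hb : b ≠ 0) (hab : a ^ 2 + b ^ 2 = 1)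
    (q p : ℍ[ℂ])
    (hconfig :
      (q = (⟨α, β, 0, 0⟩ : ℍ[ℂ]) ∧
        (p = (⟨(a : ℂ), 0, (b : ℂ), 0⟩ : ℍ[ℂ]) ∨
         p = (⟨0, (a : ℂ), 0, (b : ℂ)⟩ : ℍ[ℂ]))) ∨
      (q = (⟨0, 0, α, β⟩ : ℍ[ℂ]) ∧
        (p = (⟨(a : ℂ), 0, (b : ℂ), 0⟩ : ℍ[ℂ]) ∨
         p = (⟨0, (a : ℂ), 0, (b : ℂ)⟩ : ℍ[ℂ]))) ∨
      (q = (⟨α, 0, β, 0⟩ : ℍ[ℂ]) ∧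
        (p = (⟨(a : ℂ), (b : ℂ), 0, 0⟩ : ℍ[ℂ]) ∨
         p = (⟨0, 0, (a : ℂ), (b : ℂ)⟩ : ℍ[ℂ]))) ∨
      (q = (⟨0, α, 0, β⟩ : ℍ[ℂ]) ∧
        (p = (⟨(a : ℂ), (b : ℂ), 0, 0⟩ : ℍ[ℂ]) ∨
         p = (⟨0, 0, (a : ℂ), (b : ℂ)⟩ : ℍ[ℂ])))) :
    concurrence (p * q * p) ≠ 0 :=
  stmt_8_general α β hα hβ a b ha hb hab q p hconfig
end

section
/- Let α, β ∈ ℂ and a₁, a₃ ∈ ℝ with |α|² + |β|² = 1 and a₁² + a₃² = 1, and suppose |α|·|β|·|a₁|·|a₃| = 1/4. Set q = α + β·i and p = a₁ + a₃·j in the biquaternions ℍ[ℂ]. Then C(p·q·p) = 1, i.e., Λ(q) = p·q·p is maximally entangled. In particular this holds when |α| = |β| = 1/√2 and a₁ = a₃ = 1/√2. -/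
open Quaternion

theorem Quaternion.mk_mul_mk_mul_mk {R : Type*} [CommRing R] (a c α β : R) :
    (⟨a, 0, c, 0⟩ : ℍ[R]) * (⟨α, β, 0, 0⟩ : ℍ[R]) * (⟨a, 0, c, 0⟩ : ℍ[R]) =
      (⟨(a ^ 2 - c ^ 2) * α, (a ^ 2 + c ^ 2) * β, 2 * a * c * α, 0⟩ : ℍ[R]) := by
  ext <;> simp <;> ring

theorem concurrence_mk (x₁ x₂ x₃ x₄ : ℂ) :
    concurrence ⟨x₁, x₂, x₃, x₄⟩ = 2 * ‖x₁ * x₄ - x₂ * x₃‖ :=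
  rfl

theorem concurrence_mk_mul_mk_mul_mk (a c : ℝ) (α β : ℂ) :
    concurrence ((⟨a, 0, c, 0⟩ : ℍ[ℂ]) * (⟨α, β, 0, 0⟩ : ℍ[ℂ]) * (⟨a, 0, c, 0⟩ : ℍ[ℂ])) =
      4 * |a ^ 2 + c ^ 2| * (‖α‖ * ‖β‖ * |a| * |c|) := by
  have hsq : (a : ℂ) ^ 2 + (c : ℂ) ^ 2 = ((a ^ 2 + c ^ 2 : ℝ) : ℂ) := by push_cast; ring
  rw [Quaternion.mk_mul_mk_mul_mk, concurrence_mk, hsq]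
  simp only [mul_zero, zero_sub, norm_neg, norm_mul, Complex.norm_real, Real.norm_eq_abs,
    Complex.norm_ofNat]
  ring

theorem stmt_9_general (α β : ℂ) (a₁ a₃ : ℝ)
    (ha : a₁ ^ 2 + a₃ ^ 2 = 1)
    (hmax : ‖α‖ * ‖β‖ * |a₁| * |a₃| = 1 / 4)
    (q p : ℍ[ℂ]) (hq : q = (⟨α, β, 0, 0⟩ : ℍ[ℂ]))
    (hp : p = (⟨(a₁ : ℂ), 0, (a₃ : ℂ), 0⟩ : ℍ[ℂ])) :
    concurrence (p * q * p) = 1 := by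
  subst hp hq
  -- `rw` cannot see through `ℍ[ℂ]` to the type `ℍ[ℂ,-1,0,-1]` at which `⟨…⟩` elaborates; `exact` can.
  calc concurrence _ = 4 * |a₁ ^ 2 + a₃ ^ 2| * (‖α‖ * ‖β‖ * |a₁| * |a₃|) :=
        concurrence_mk_mul_mk_mul_mk a₁ a₃ α β
    _ = 1 := by rw [ha, hmax]; norm_num

theorem stmt_9 (α β : ℂ) (a₁ a₃ : ℝ)
    (hαβ : ‖α‖ ^ 2 + ‖β‖ ^ 2 = 1)
    (ha : a₁ ^ 2 + a₃ ^ 2 = 1)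
    (hmax : ‖α‖ * ‖β‖ * |a₁| * |a₃| = 1 / 4)
    (q p : ℍ[ℂ]) (hq : q = (⟨α, β, 0, 0⟩ : ℍ[ℂ]))
    (hp : p = (⟨(a₁ : ℂ), 0, (a₃ : ℂ), 0⟩ : ℍ[ℂ])) :
    concurrence (p * q * p) = 1 :=
  stmt_9_general α β a₁ a₃ ha hmax q p hq hp
end
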